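/- Fix k ∈ ℕ and n ≥ 1. For every π ∈ NC^{(k)}(n), one has Kr(Red(π)) = Red(Kr(π)) as partitions of [n̄], where Kr(Red(π)) denotes the Kreweras complement of the non-crossing partition Red(π) ∈ NC(n). -/

import Mathlib

open scoped BigOperators
attribute [local instance] Classical.propDecidable

/-- A (set) partition of a type `X`: nonempty blocks, every point in a unique block. -/
def IsPartition {X : Type*} (P : Finset (Finset X)) : Prop :=
  (∀ B ∈ P, B.Nonempty) ∧ ∀ x : X, ∃! B, B ∈ P ∧ x ∈ B

/-- Non-crossing collection of blocks in a linear order. -/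
def IsNonCrossing {X : Type*} [LinearOrder X] (P : Finset (Finset X)) : Prop :=
  ∀ a b c d : X, a < b → b < c → c < d →
    (∃ B ∈ P, a ∈ B ∧ c ∈ B) → (∃ B ∈ P, b ∈ B ∧ d ∈ B) →
    ∃ B ∈ P, a ∈ B ∧ b ∈ B

/-- The finset `NC(n)` of non-crossing partitions of `[n]` (modelled on `Fin n`). -/
noncomputable def ncFinset (n : ℕ) : Finset (Finset (Finset (Fin n))) :=
  Finset.univ.filter fun P => IsPartition P ∧ IsNonCrossing P

/-- The subtuple `(a_1,…,a_n)|V` of the entries indexed by `V`, in increasing order. -/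
noncomputable def restrictTuple {A : Type*} {n : ℕ} (a : Fin n → A) (V : Finset (Fin n)) :
    Fin V.card → A :=
  fun i => a (V.orderIsoOfFin rfl i).1
/-- The interleaved set `[m] ∪ [m̄]` with order `1 < 1̄ < 2 < 2̄ < ⋯ < m < m̄`
(unbarred = `false`, barred = `true`). -/
abbrev Interl (m : ℕ) := Lex (Fin m × Bool)

/-- The copy of a block of `[m]` inside the unbarred part of `[m] ∪ [m̄]`. -/
def unbar {m : ℕ} (B : Finset (Fin m)) : Finset (Interl m) :=
  B.image fun i => toLex (i, false)

/-- The copy of a block of `[m]` inside the barred part of `[m] ∪ [m̄]`. -/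
def barred {m : ℕ} (B : Finset (Fin m)) : Finset (Interl m) :=
  B.image fun i => toLex (i, true)

/-- The union `p ∪ q` of a partition `p` of `[m]` and a partition `q` of the barred copy
`[m̄]` (blocks of `q` being recorded by their unbarred labels), as a collection of blocks
of the interleaved set `[m] ∪ [m̄]`. -/
noncomputable def unionPart {m : ℕ} (p q : Finset (Finset (Fin m))) :
    Finset (Finset (Interl m)) :=
  p.image unbar ∪ q.image barred

/-- `P` refines `Q` (reverse refinement order: `P ≼ Q`). -/
def Refines {X : Type*} (P Q : Finset (Finset X)) : Prop :=
  ∀ B ∈ P, ∃ C ∈ Q, B ⊆ C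

/-- `q` is the Kreweras complement of `p`: `q` is a partition of `[m̄]` (identified with
a partition of `[m]` by relabeling) such that `p ∪ q` is non-crossing on the interleaved
set, and `q` is the greatest such partition for the reverse refinement order. -/
def IsKr {m : ℕ} (p q : Finset (Finset (Fin m))) : Prop :=
  IsPartition q ∧ IsNonCrossing (unionPart p q) ∧
    ∀ q' : Finset (Finset (Fin m)), IsPartition q' → IsNonCrossing (unionPart p q') →
      Refines q' q

/-- The Kreweras complement `Kr(p)`, as a function (defined via choice: for a
non-crossing partition `p` the complement exists and is unique). -/
noncomputable def kr {m : ℕ} (p : Finset (Finset (Fin m))) : Finset (Finset (Fin m)) :=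
  if h : ∃ q, IsKr p q then h.choose else ∅
/-- The reduction map `Red : [(k+1)n] → [n]`, sending `x` to its residue mod `n`
(with `Fin` modelling, `x ↦ x % n`). -/
def red {k n : ℕ} (x : Fin ((k + 1) * n)) : Fin n :=
  ⟨x.1 % n, Nat.mod_lt _ (Nat.pos_of_ne_zero (by rintro rfl; exact absurd x.2 (by simp)))⟩

/-- The image of a collection of blocks under the reduction map. -/
noncomputable def redPart {k n : ℕ} (P : Finset (Finset (Fin ((k + 1) * n)))) :
    Finset (Finset (Fin n)) :=
  P.image fun B => B.image red

/-- The reduction map on the interleaved set, preserving bars. -/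
def redInterl {k n : ℕ} (x : Interl ((k + 1) * n)) : Interl n :=
  toLex (red (ofLex x).1, (ofLex x).2)

/-- `NC^{(k)}(n)`: the non-crossing partitions of `[(k+1)n]` satisfying the mod `n`
reduction property, i.e. `Red(π)` is a non-crossing partition of `[n]` and
`Red(Kr(π))` is a non-crossing partition of `[n̄]`. -/
def NCk (k n : ℕ) : Set (Finset (Finset (Fin ((k + 1) * n)))) :=
  {π | IsPartition π ∧ IsNonCrossing π ∧
       IsPartition (redPart π) ∧ IsNonCrossing (redPart π) ∧
       IsPartition (redPart (kr π)) ∧ IsNonCrossing (redPart (kr π))}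

/-!
For a non-crossing partition `p`, two points `u < v` lie in one block of `Kr(p)` exactly when
`(u, v]` is a union of blocks of `p`: a block straddling `u` or `v` would cross the block of
`u, v`; conversely, the partition into singletons with `u, v` merged is then still non-crossing
together with `p`, so by maximality it refines `Kr(p)`. Hence `Red(Kr π)` is the Kreweras
complement of `Red(π)` once we know that, for `i < j` in `[n]`, the interval `(i, j]` is a union
of blocks of `Red(π)` iff `i` and `j` are residues of one block of `Kr(π)`.

Let `u < v` share a block of `Kr(π)`, and suppose a block of `Red(π)` meets the cyclic interval
`(Red u, Red v]` without lying in it. Lift a point of it in that interval to the last period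
`(g, v]` before `v`, where `Red g = Red u`. The block of `π` through the lift stays in `(u, v]`,
so it reaches down to `g`, and non-crossing of `π ∪ Kr(π)` puts a point of residue `Red v` in the
block of `g`, closer to `g` than `v` is to `u`: descend. Conversely, if `(i, j]` is a union of
blocks of `Red(π)`, then `(i, j + n q]` is a union of blocks of `π` for the least `q` such that no
block of `π` inside `Red⁻¹ (i, j]` leaves the first `q + 1` periods.
-/

section Partition

variable {X : Type*}

def IsSaturated (p : Finset (Finset X)) (S : Set X) : Prop :=
  ∀ B ∈ p, ∀ x ∈ B, ∀ y ∈ B, x ∈ S → y ∈ S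

theorem IsSaturated.compl {p : Finset (Finset X)} {S : Set X} (h : IsSaturated p S) :
    IsSaturated p Sᶜ :=
  fun B hB x hx y hy hxS hyS => hxS (h B hB y hy x hx hyS)

theorem IsSaturated.preimage {Y : Type*} [DecidableEq Y] {P : Finset (Finset X)} {f : X → Y}
    {S : Set Y} (h : IsSaturated (P.image (Finset.image f)) S) : IsSaturated P (f ⁻¹' S) :=
  fun _ hB _ hx _ hy => h _ (Finset.mem_image_of_mem _ hB) _ (Finset.mem_image_of_mem f hx) _
    (Finset.mem_image_of_mem f hy)

theorem IsPartition.eq_of_mem {P : Finset (Finset X)} (h : IsPartition P) {x : X}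
    {B B' : Finset X} (hB : B ∈ P) (hB' : B' ∈ P) (hx : x ∈ B) (hx' : x ∈ B') : B = B' :=
  (h.2 x).unique ⟨hB, hx⟩ ⟨hB', hx'⟩

theorem IsPartition.exists_mem {P : Finset (Finset X)} (h : IsPartition P) (x : X) :
    ∃ B ∈ P, x ∈ B :=
  let ⟨B, hB, _⟩ := h.2 x; ⟨B, hB⟩

theorem IsPartition.eq_of_refines {P Q : Finset (Finset X)} (hP : IsPartition P)
    (hQ : IsPartition Q) (hPQ : Refines P Q) (hQP : Refines Q P) : P = Q := by
  suffices key : ∀ {P Q : Finset (Finset X)}, IsPartition P → Refines P Q → Refines Q P →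
      P ⊆ Q from (key hP hPQ hQP).antisymm (key hQ hQP hPQ)
  intro P Q hP hPQ hQP B hB
  obtain ⟨C, hC, hBC⟩ := hPQ B hB
  obtain ⟨B', hB', hCB'⟩ := hQP C hC
  obtain ⟨x, hx⟩ := hP.1 B hB
  obtain rfl : B = B' := hP.eq_of_mem hB hB' hx (hCB' (hBC hx))
  rwa [hBC.antisymm hCB']

theorem refines_of_forall_lt [LinearOrder X] {P Q : Finset (Finset X)} (hP : ∀ B ∈ P, B.Nonempty)
    (hQ : IsPartition Q)
    (h : ∀ x y, x < y → (∃ B ∈ P, x ∈ B ∧ y ∈ B) → ∃ C ∈ Q, x ∈ C ∧ y ∈ C) :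
    Refines P Q := by
  intro B hB
  obtain ⟨x, hx⟩ := hP B hB
  obtain ⟨C, hC, hxC⟩ := hQ.exists_mem x
  refine ⟨C, hC, fun y hy => ?_⟩
  rcases lt_trichotomy x y with hxy | rfl | hxy
  · obtain ⟨C', hC', hxC', hyC'⟩ := h x y hxy ⟨B, hB, hx, hy⟩
    rwa [hQ.eq_of_mem hC hC' hxC hxC']
  · exact hxC
  · obtain ⟨C', hC', hyC', hxC'⟩ := h y x hxy ⟨B, hB, hy, hx⟩
    rwa [hQ.eq_of_mem hC hC' hxC hxC']

theorem IsNonCrossing.mem_Ioo_of_lt_of_lt [LinearOrder X] {P : Finset (Finset X)}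
    (hP : IsPartition P) (hnc : IsNonCrossing P) {B₀ B : Finset X} (hB₀ : B₀ ∈ P) (hB : B ∈ P)
    {e e' t t' : X} (he : e ∈ B₀) (he' : e' ∈ B₀) (ht : t ∈ B) (ht' : t' ∈ B) (htB₀ : t ∉ B₀)
    (het : e < t) (hte' : t < e') : t' ∈ Set.Ioo e e' := by
  have hne : B ≠ B₀ := fun h => htB₀ (h ▸ ht)
  refine ⟨lt_of_not_ge fun hle => ?_, lt_of_not_ge fun hle => ?_⟩
  · rcases hle.lt_or_eq with hlt | rfl
    · obtain ⟨W, hW, ht'W, heW⟩ := hnc t' e t e' hlt het hte' ⟨B, hB, ht', ht⟩ ⟨B₀, hB₀, he, he'⟩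
      exact hne ((hP.eq_of_mem hB hW ht' ht'W).trans (hP.eq_of_mem hW hB₀ heW he))
    · exact hne (hP.eq_of_mem hB hB₀ ht' he)
  · rcases hle.lt_or_eq with hlt | rfl
    · obtain ⟨W, hW, heW, htW⟩ := hnc e t e' t' het hte' hlt ⟨B₀, hB₀, he, he'⟩ ⟨B, hB, ht, ht'⟩
      exact hne ((hP.eq_of_mem hB hW ht htW).trans (hP.eq_of_mem hW hB₀ heW he))
    · exact hne (hP.eq_of_mem hB hB₀ ht' he')

theorem IsKr.unique {m : ℕ} {p q q' : Finset (Finset (Fin m))} (h : IsKr p q) (h' : IsKr p q') :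
    q = q' :=
  h.1.eq_of_refines h'.1 (h'.2.2 q h.1 h.2.1) (h.2.2 q' h'.1 h'.2.1)

theorem kr_eq_of_isKr {m : ℕ} {p q : Finset (Finset (Fin m))} (h : IsKr p q) : kr p = q := by
  have hex : ∃ q, IsKr p q := ⟨q, h⟩
  rw [kr, dif_pos hex]
  exact hex.choose_spec.unique h

theorem isKr_kr {m : ℕ} {p : Finset (Finset (Fin m))} (h : ∃ q, IsKr p q) : IsKr p (kr p) := by
  obtain ⟨q, hq⟩ := h
  rwa [kr_eq_of_isKr hq]

end Partition

section Interleaved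

variable {m : ℕ} {p q : Finset (Finset (Fin m))}

theorem toLex_lt_toLex_iff {a b : Fin m} {s t : Bool} :
    toLex (a, s) < toLex (b, t) ↔ a < b ∨ a = b ∧ s = false ∧ t = true := by
  rw [Prod.Lex.lt_iff]; simp [Bool.lt_iff]

theorem toLex_lt_toLex_of_lt {a b : Fin m} {s t : Bool} (h : a < b) :
    toLex (a, s) < toLex (b, t) :=
  toLex_lt_toLex_iff.2 (Or.inl h)

theorem toLex_false_lt_toLex_true {a b : Fin m} (h : a ≤ b) :
    toLex (a, false) < toLex (b, true) :=
  toLex_lt_toLex_iff.2 (h.lt_or_eq.imp id fun h => ⟨h, rfl, rfl⟩)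

theorem mem_unbar {B : Finset (Fin m)} {x : Fin m} {s : Bool} :
    toLex (x, s) ∈ unbar B ↔ x ∈ B ∧ s = false := by
  simp [unbar, eq_comm]

theorem mem_barred {B : Finset (Fin m)} {x : Fin m} {s : Bool} :
    toLex (x, s) ∈ barred B ↔ x ∈ B ∧ s = true := by
  simp [barred, eq_comm]

theorem unbar_mem_unionPart {B : Finset (Fin m)} (h : B ∈ p) : unbar B ∈ unionPart p q :=
  Finset.mem_union_left _ (Finset.mem_image_of_mem _ h)

theorem barred_mem_unionPart {B : Finset (Fin m)} (h : B ∈ q) : barred B ∈ unionPart p q :=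
  Finset.mem_union_right _ (Finset.mem_image_of_mem _ h)

theorem not_sameBlock_unbar_barred {x y : Fin m} :
    ¬ ∃ W ∈ unionPart p q, toLex (x, false) ∈ W ∧ toLex (y, true) ∈ W := by
  rintro ⟨W, hW, hx, hy⟩
  rcases Finset.mem_union.1 hW with h | h <;> obtain ⟨P, -, rfl⟩ := Finset.mem_image.1 h
  · simp [mem_unbar] at hy
  · simp [mem_barred] at hx

theorem isSaturated_Ioc_of_isNonCrossing_unionPart (hnc : IsNonCrossing (unionPart p q))
    {C : Finset (Fin m)} (hC : C ∈ q) {u v : Fin m} (hu : u ∈ C) (hv : v ∈ C) :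
    IsSaturated p (Set.Ioc u v) := by
  intro B hB t ht t' ht' ⟨hut, htv⟩
  have hC' := barred_mem_unionPart (p := p) hC
  have hB' := unbar_mem_unionPart (q := q) hB
  by_contra hout
  rcases not_and_or.1 hout with ht'u | ht'v
  · exact not_sameBlock_unbar_barred <| hnc _ _ _ _ (toLex_false_lt_toLex_true (not_lt.1 ht'u))
      (toLex_lt_toLex_of_lt hut) (toLex_false_lt_toLex_true htv)
      ⟨_, hB', mem_unbar.2 ⟨ht', rfl⟩, mem_unbar.2 ⟨ht, rfl⟩⟩
      ⟨_, hC', mem_barred.2 ⟨hu, rfl⟩, mem_barred.2 ⟨hv, rfl⟩⟩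
  · obtain ⟨W, hW, huW, htW⟩ := hnc _ _ _ _ (toLex_lt_toLex_of_lt hut)
      (toLex_false_lt_toLex_true htv) (toLex_lt_toLex_of_lt (not_le.1 ht'v))
      ⟨_, hC', mem_barred.2 ⟨hu, rfl⟩, mem_barred.2 ⟨hv, rfl⟩⟩
      ⟨_, hB', mem_unbar.2 ⟨ht, rfl⟩, mem_unbar.2 ⟨ht', rfl⟩⟩
    exact not_sameBlock_unbar_barred ⟨W, hW, htW, huW⟩

theorem isNonCrossing_unionPart (hp : IsNonCrossing p) (hq : IsNonCrossing q)
    (hsat : ∀ C ∈ q, ∀ u ∈ C, ∀ v ∈ C, IsSaturated p (Set.Ioc u v)) :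
    IsNonCrossing (unionPart p q) := by
  simp only [IsNonCrossing, toLex.surjective.forall, Prod.forall, toLex_lt_toLex_iff]
  intro a s₁ b s₂ c s₃ d s₄ hab hbc hcd ⟨W₁, hW₁, ha, hc⟩ ⟨W₂, hW₂, hb, hd⟩
  rcases Finset.mem_union.1 hW₁ with h₁ | h₁ <;> obtain ⟨P₁, hP₁, rfl⟩ := Finset.mem_image.1 h₁ <;>
    rcases Finset.mem_union.1 hW₂ with h₂ | h₂ <;>
    obtain ⟨P₂, hP₂, rfl⟩ := Finset.mem_image.1 h₂ <;>
    simp only [mem_unbar, mem_barred] at ha hb hc hd <;>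
    obtain ⟨ha, rfl⟩ := ha <;> obtain ⟨hb, rfl⟩ := hb <;> obtain ⟨hc, rfl⟩ := hc <;>
    obtain ⟨hd, rfl⟩ := hd <;> simp only [Bool.false_eq_true, and_false, or_false, and_true,
      and_self, Bool.true_eq_false] at hab hbc hcd
  · obtain ⟨W, hW, haW, hbW⟩ := hp a b c d hab hbc hcd ⟨P₁, hP₁, ha, hc⟩ ⟨P₂, hP₂, hb, hd⟩
    exact ⟨_, unbar_mem_unionPart hW, mem_unbar.2 ⟨haW, rfl⟩, mem_unbar.2 ⟨hbW, rfl⟩⟩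
  · exact absurd (hsat P₂ hP₂ b hb d hd P₁ hP₁ c hc a ha ⟨hbc, le_of_lt_or_eq hcd⟩).1
      (not_lt.2 (le_of_lt_or_eq hab))
  · exact absurd (hsat P₁ hP₁ a ha c hc P₂ hP₂ b hb d hd ⟨hab, le_of_lt_or_eq hbc⟩).2
      (not_le.2 hcd)
  · obtain ⟨W, hW, haW, hbW⟩ := hq a b c d hab hbc hcd ⟨P₁, hP₁, ha, hc⟩ ⟨P₂, hP₂, hb, hd⟩
    exact ⟨_, barred_mem_unionPart hW, mem_barred.2 ⟨haW, rfl⟩, mem_barred.2 ⟨hbW, rfl⟩⟩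

theorem IsKr.exists_mem_of_isSaturated (hq : IsKr p q) (hp : IsNonCrossing p) {u v : Fin m}
    (huv : u < v) (hsat : IsSaturated p (Set.Ioc u v)) : ∃ C ∈ q, u ∈ C ∧ v ∈ C := by
  let f : Fin m → Finset (Fin m) := fun x => if x = u ∨ x = v then {u, v} else {x}
  have hf : ∀ x, f x = {u, v} ∧ (x = u ∨ x = v) ∨ f x = {x} ∧ ¬(x = u ∨ x = v) := fun x =>
    (em (x = u ∨ x = v)).imp (fun hx => ⟨if_pos hx, hx⟩) fun hx => ⟨if_neg hx, hx⟩
  have hself : ∀ x, x ∈ f x := fun x => by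
    rcases hf x with ⟨hx, hxuv⟩ | ⟨hx, -⟩ <;> simp_all
  have hpair : ∀ z a b, a ∈ f z → b ∈ f z → a < b → a = u ∧ b = v := by
    intro z a b ha hb hab
    rcases hf z with ⟨hz, -⟩ | ⟨hz, -⟩ <;> simp only [hz, Finset.mem_insert,
      Finset.mem_singleton] at ha hb
    · rcases ha with rfl | rfl <;> rcases hb with rfl | rfl <;> simp_all [huv.not_gt]
    · exact absurd (ha.trans hb.symm) hab.ne
  have hpart : IsPartition (Finset.univ.image f) := by
    refine ⟨?_, fun x => ⟨f x, ⟨Finset.mem_image_of_mem f (Finset.mem_univ x), hself x⟩, ?_⟩⟩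
    · simp only [Finset.mem_image, Finset.mem_univ, true_and, forall_exists_index]
      rintro _ z rfl
      exact ⟨z, hself z⟩
    · simp only [Finset.mem_image, Finset.mem_univ, true_and, and_imp, forall_exists_index]
      rintro _ z rfl hx
      rcases hf z with ⟨hz, hzuv⟩ | ⟨hz, hzuv⟩ <;> rcases hf x with ⟨hx', hxuv⟩ | ⟨hx', hxuv⟩ <;>
        simp_all
  have hnc : IsNonCrossing (Finset.univ.image f) := by
    simp only [IsNonCrossing, Finset.mem_image, Finset.mem_univ, true_and]
    rintro a b c d hab hbc hcd ⟨_, ⟨z, rfl⟩, ha, hc⟩ ⟨_, ⟨z', rfl⟩, hb, hd⟩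
    obtain ⟨rfl, -⟩ := hpair z a c ha hc (hab.trans hbc)
    exact absurd (hpair z' b d hb hd (hbc.trans hcd)).1 hab.ne'
  have hsat' : ∀ C ∈ Finset.univ.image f, ∀ a ∈ C, ∀ b ∈ C, IsSaturated p (Set.Ioc a b) := by
    simp only [Finset.mem_image, Finset.mem_univ, true_and, forall_exists_index]
    rintro _ z rfl a ha b hb
    rcases lt_or_ge a b with hab | hba
    · obtain ⟨rfl, rfl⟩ := hpair z a b ha hb hab
      exact hsat
    · simp [IsSaturated, Set.Ioc_eq_empty_of_le hba]
  obtain ⟨C, hC, hsub⟩ := hq.2.2 _ hpart (isNonCrossing_unionPart hp hnc hsat') {u, v}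
    (Finset.mem_image.2 ⟨u, Finset.mem_univ u, if_pos (Or.inl rfl)⟩)
  exact ⟨C, hC, hsub (by simp), hsub (by simp)⟩

end Interleaved

theorem Nat.lt_iff_div_lt_or_div_eq_and_mod_lt {x y n : ℕ} :
    x < y ↔ x / n < y / n ∨ x / n = y / n ∧ x % n < y % n := by
  have hx := Nat.div_add_mod x n
  have hy := Nat.div_add_mod y n
  constructor
  · intro h
    rcases lt_trichotomy (x / n) (y / n) with h' | h' | h'
    · exact Or.inl h'
    · exact Or.inr ⟨h', by rw [h'] at hx; omega⟩
    · exact absurd (Nat.div_le_div_right h.le) (not_le.2 h')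
  · rintro (h | ⟨h, h'⟩)
    · exact Nat.lt_of_div_lt_div h
    · rw [h] at hx; omega

section Reduction

open Finset

variable {k n : ℕ}

-- The cyclic interval `(i, j]` of `ℤ/n`, measured from `i`; it is empty when `i = j`.
def cycIoc (i j : Fin n) : Set (Fin n) :=
  {r | 0 < (r - i).val ∧ (r - i).val ≤ (j - i).val}

theorem mem_cycIoc {i j r : Fin n} :
    r ∈ cycIoc i j ↔ 0 < (r - i).val ∧ (r - i).val ≤ (j - i).val :=
  Iff.rfl

theorem Fin.val_sub_eq_ite (a b : Fin n) :
    (a - b).val = if b ≤ a then a.val - b.val else n + a.val - b.val := by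
  split_ifs with h
  · exact Fin.sub_val_of_le h
  · exact Fin.coe_sub_iff_lt.2 (not_le.1 h)

theorem compl_cycIoc {i j : Fin n} (h : i ≠ j) : (cycIoc i j)ᶜ = cycIoc j i := by
  ext r
  have := Fin.val_ne_of_ne h
  simp only [Set.mem_compl_iff, mem_cycIoc, Fin.val_sub_eq_ite, Fin.le_def]
  have := r.isLt; have := i.isLt; have := j.isLt
  split_ifs <;> omega

theorem cycIoc_of_lt {i j : Fin n} (h : i < j) : cycIoc i j = Set.Ioc i j := by
  ext r
  simp only [mem_cycIoc, Set.mem_Ioc, Fin.val_sub_eq_ite, Fin.le_def, Fin.lt_def]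
  have := r.isLt; have := i.isLt; have := j.isLt; rw [Fin.lt_def] at h
  split_ifs <;> omega

theorem red_val (x : Fin ((k + 1) * n)) : (red x).val = x.val % n := rfl

theorem val_red_sub_red {g r : Fin ((k + 1) * n)} (hgr : g ≤ r) (hrg : r.val - g.val < n) :
    (red r - red g).val = r.val - g.val := by
  have : NeZero n := ⟨by rintro rfl; simp at hrg⟩
  suffices red r - red g = ⟨r.val - g.val, hrg⟩ from congrArg Fin.val this
  rw [sub_eq_iff_eq_add]
  ext
  rw [Fin.val_add, red_val, red_val, Nat.add_mod_mod, Nat.sub_add_cancel (Fin.le_def.1 hgr)]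

theorem red_mem_cycIoc {g r v : Fin ((k + 1) * n)} (hgr : g < r) (hrv : r ≤ v)
    (hvg : v.val - g.val < n) : red r ∈ cycIoc (red g) (red v) := by
  rw [Fin.lt_def] at hgr; rw [Fin.le_def] at hrv
  rw [mem_cycIoc, val_red_sub_red hgr.le (by omega), val_red_sub_red (hgr.le.trans hrv) hvg]
  omega

theorem exists_red_eq_of_mem_cycIoc {g v : Fin ((k + 1) * n)} (hgv : g ≤ v)
    (hvg : v.val - g.val < n) {c : Fin n} (hc : c ∈ cycIoc (red g) (red v)) :
    ∃ z, g < z ∧ z ≤ v ∧ red z = c := by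
  have : NeZero n := ⟨by rintro rfl; simp at hvg⟩
  rw [Fin.le_def] at hgv
  rw [mem_cycIoc, val_red_sub_red (Fin.le_def.2 hgv) hvg] at hc
  let z : Fin ((k + 1) * n) := ⟨g.val + (c - red g).val, by omega⟩
  have hgz : g ≤ z := Fin.le_def.2 (Nat.le_add_right _ _)
  have hzv : z.val - g.val = (c - red g).val := Nat.add_sub_cancel_left _ _
  refine ⟨z, Fin.lt_def.2 (by omega), Fin.le_def.2 (by omega), ?_⟩
  rw [← sub_left_inj (a := red g)]
  exact Fin.ext (by rw [val_red_sub_red hgz (by omega), hzv])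

theorem exists_red_eq_red_of_le {u v : Fin ((k + 1) * n)} (huv : u ≤ v) :
    ∃ g, u ≤ g ∧ g ≤ v ∧ red g = red u ∧ v.val - g.val < n := by
  have hn : 0 < n := Nat.pos_of_ne_zero (by rintro rfl; exact absurd u.isLt (by simp))
  rw [Fin.le_def] at huv
  have hdiv := Nat.div_add_mod (v.val - u.val) n
  have hmod := Nat.mod_lt (v.val - u.val) hn
  refine ⟨⟨u.val + n * ((v.val - u.val) / n), by omega⟩, Fin.le_def.2 (by simp),
    Fin.le_def.2 (by simp; omega), Fin.ext ?_, by simp; omega⟩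
  simp [red_val, Nat.add_mul_mod_self_left]

theorem isSaturated_redPart_cycIoc {π Q : Finset (Finset (Fin ((k + 1) * n)))}
    (hπ : IsPartition π) (hQ : IsPartition Q) (hnc : IsNonCrossing (unionPart π Q))
    (hRπ : IsPartition (redPart π)) (hRQ : IsPartition (redPart Q))
    {C : Finset (Fin ((k + 1) * n))} (hC : C ∈ Q) {u v : Fin ((k + 1) * n)} (hu : u ∈ C)
    (hv : v ∈ C) (huv : u < v) (hred : red u ≠ red v) :
    IsSaturated (redPart π) (cycIoc (red u) (red v)) := by
  intro B' hB' c hc a ha hcS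
  by_contra haS
  obtain ⟨g, hug, hgv, hgu, hvg⟩ := exists_red_eq_red_of_le huv.le
  obtain ⟨z, hgz, hzv, hzc⟩ := exists_red_eq_of_mem_cycIoc hgv hvg (hgu ▸ hcS)
  obtain ⟨Bz, hBz, hzBz⟩ := hπ.exists_mem z
  obtain ⟨w, hwBz, hwa⟩ : ∃ w ∈ Bz, red w = a := by
    rw [← mem_image, hRπ.eq_of_mem (mem_image_of_mem _ hBz) hB' (mem_image.2 ⟨z, hzBz, hzc⟩) hc]
    exact ha
  have hw : w ∈ Set.Ioc u v := isSaturated_Ioc_of_isNonCrossing_unionPart hnc hC hu hv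
    Bz hBz z hzBz w hwBz ⟨hug.trans_lt hgz, hzv⟩
  have hwg : w ≤ g := not_lt.1 fun hgw => haS (hwa ▸ hgu ▸ red_mem_cycIoc hgw hw.2 hvg)
  obtain ⟨C', hC', hgC'⟩ := hQ.exists_mem g
  obtain ⟨h, hhC', hhv⟩ : ∃ h ∈ C', red h = red v := by
    rw [← mem_image, hRQ.eq_of_mem (mem_image_of_mem _ hC') (mem_image_of_mem _ hC)
      (mem_image.2 ⟨g, hgC', hgu⟩) (mem_image_of_mem _ hu)]
    exact mem_image_of_mem _ hv
  have hsat' : ∀ {x y}, x ∈ C' → y ∈ C' → IsSaturated π (Set.Ioc x y) :=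
    isSaturated_Ioc_of_isNonCrossing_unionPart hnc hC'
  have hwh : w ≤ h := not_lt.1 fun hhw =>
    (hsat' hhC' hgC' Bz hBz w hwBz z hzBz ⟨hhw, hwg⟩).2.not_gt hgz
  have hhz : h < z := not_le.1 fun hzh =>
    (hsat' hgC' hhC' Bz hBz z hzBz w hwBz ⟨hgz, hzh⟩).1.not_ge hwg
  -- descent: `h, g` share a block of `Q`, are closer than `u, v`, and have residues `red v, red u`
  rcases lt_trichotomy h g with hhg | rfl | hgh
  · have hsat := isSaturated_redPart_cycIoc hπ hQ hnc hRπ hRQ hC' hhC' hgC' hhg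
      (by rw [hhv, hgu]; exact hred.symm)
    rw [hhv, hgu, ← compl_cycIoc hred] at hsat
    exact haS (by simpa using hsat.compl B' hB' c hc a ha (by simpa using hcS))
  · exact hred (hgu.symm.trans hhv)
  · have hsat := isSaturated_redPart_cycIoc hπ hQ hnc hRπ hRQ hC' hgC' hhC' hgh
      (by rw [hhv, hgu]; exact hred)
    rw [hhv, hgu] at hsat
    exact haS (hsat B' hB' c hc a ha hcS)
termination_by v.val - u.val
decreasing_by
  all_goals simp only [Fin.lt_def, Fin.le_def, Set.mem_Ioc] at *
  all_goals omega

theorem isSaturated_Ioc_of_minimal_period {π : Finset (Finset (Fin ((k + 1) * n)))}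
    (hπ : IsPartition π) (hnc : IsNonCrossing π) {i j : Fin n}
    (hT : IsSaturated π (red ⁻¹' Set.Ioc i j)) {q₀ : ℕ}
    (hq₀ : IsSaturated π (red ⁻¹' Set.Ioc i j ∩ {x | x.val / n ≤ q₀}))
    (hmin : ∀ s < q₀, ¬ IsSaturated π (red ⁻¹' Set.Ioc i j ∩ {x | x.val / n ≤ s}))
    {u v : Fin ((k + 1) * n)} (hu0 : u.val / n = 0) (hui : red u = i) (hvq : v.val / n = q₀)
    (hvj : red v = j) : IsSaturated π (Set.Ioc u v) := by
  set T : Set (Fin ((k + 1) * n)) := red ⁻¹' Set.Ioc i j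
  have hmemT : ∀ x, x ∈ T ↔ i.val < x.val % n ∧ x.val % n ≤ j.val := fun x => Iff.rfl
  have hlt : ∀ x y : Fin ((k + 1) * n), x < y ↔ x.val / n < y.val / n ∨
      x.val / n = y.val / n ∧ x.val % n < y.val % n := fun x y =>
    Fin.lt_def.trans Nat.lt_iff_div_lt_or_div_eq_and_mod_lt
  rw [Fin.ext_iff, red_val] at hui hvj
  have hu_lt : ∀ x ∈ T, u < x := fun x hx => by
    rw [hmemT] at hx
    rw [hlt, hu0, hui]
    exact (Nat.eq_zero_or_pos _).elim (fun h => Or.inr ⟨h.symm, hx.1⟩) Or.inl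
  have hle_v : ∀ x ∈ T, x.val / n ≤ q₀ → x ≤ v := fun x hx hxq => by
    rw [hmemT] at hx
    rw [← not_lt, hlt, hvq, hvj]
    omega
  intro B hB t ht t' ht' htuv
  have htuv' := htuv
  rw [Set.mem_Ioc, ← not_lt, hlt, hlt, hu0, hui, hvq, hvj] at htuv'
  by_cases htT : t ∈ T
  · obtain ⟨ht'T, ht'q⟩ := hq₀ B hB t ht t' ht' ⟨htT, by simp only [Set.mem_ofPred_eq]; omega⟩
    exact ⟨hu_lt t' ht'T, hle_v t' ht'T ht'q⟩
  -- `t` lies in a gap between two runs of `T`; by minimality of `q₀` a block inside `T`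
  -- jumps over that gap, and it encloses the block of `t`.
  obtain ⟨s, hsq, hs⟩ :
      ∃ s < q₀, ∀ x ∈ T, (x.val / n ≤ s → x < t) ∧ (s < x.val / n → t < x) := by
    simp only [hmemT, hlt]
    rw [hmemT] at htT
    by_cases hti : t.val % n ≤ i.val
    · exact ⟨t.val / n - 1, by omega, fun x hx => by omega⟩
    · exact ⟨t.val / n, by omega, fun x hx => by omega⟩
  have hnot := hmin s hsq
  simp only [IsSaturated, not_forall] at hnot
  obtain ⟨B₀, hB₀, e, he, e', he', ⟨heT, hes⟩, hne'⟩ := hnot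
  have he'T : e' ∈ T := hT B₀ hB₀ e he e' he' heT
  have he'q : e'.val / n ≤ q₀ :=
    (hq₀ B₀ hB₀ e he e' he' ⟨heT, (Set.mem_ofPred_eq ▸ hes).trans hsq.le⟩).2
  have htB₀ : t ∉ B₀ := fun htB₀ => htT (hT B₀ hB₀ e he t htB₀ heT)
  have ht'e := hnc.mem_Ioo_of_lt_of_lt hπ hB₀ hB he he' ht ht' htB₀ ((hs e heT).1 hes)
    ((hs e' he'T).2 (by simpa [he'T] using hne'))
  exact ⟨(hu_lt e heT).trans ht'e.1, ht'e.2.le.trans (hle_v e' he'T he'q)⟩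

theorem exists_mem_redPart_of_isSaturated {π Q : Finset (Finset (Fin ((k + 1) * n)))}
    (hπ : IsPartition π) (hnc : IsNonCrossing π) (hQ : IsKr π Q) {i j : Fin n} (hij : i < j)
    (hsat : IsSaturated (redPart π) (Set.Ioc i j)) : ∃ C ∈ redPart Q, i ∈ C ∧ j ∈ C := by
  have hn : 0 < n := i.pos
  have hT : IsSaturated π (red ⁻¹' Set.Ioc i j) := hsat.preimage
  have hdivk : ∀ x : Fin ((k + 1) * n), x.val / n ≤ k := fun x =>
    Nat.lt_succ_iff.1 ((Nat.div_lt_iff_lt_mul hn).2 x.isLt)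
  have hk : IsSaturated π (red ⁻¹' Set.Ioc i j ∩ {x | x.val / n ≤ k}) := by
    simpa [hdivk] using hT
  have hex : ∃ s, IsSaturated π (red ⁻¹' Set.Ioc i j ∩ {x | x.val / n ≤ s}) := ⟨k, hk⟩
  have hvlt : j.val + n * Nat.find hex < (k + 1) * n := by
    have := Nat.mul_le_mul_left n (Nat.find_min' hex hk)
    have : (k + 1) * n = n * k + n := by ring
    omega
  let u : Fin ((k + 1) * n) := ⟨i.val, by have := i.isLt; nlinarith⟩
  let v : Fin ((k + 1) * n) := ⟨j.val + n * Nat.find hex, hvlt⟩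
  have hu : u.val / n = 0 ∧ red u = i :=
    ⟨Nat.div_eq_of_lt i.isLt, Fin.ext (Nat.mod_eq_of_lt i.isLt)⟩
  have hv : v.val / n = Nat.find hex ∧ red v = j := by
    refine ⟨?_, Fin.ext ?_⟩ <;>
      simp [v, red_val, Nat.add_mul_div_left _ _ hn, Nat.div_eq_of_lt j.isLt,
        Nat.mod_eq_of_lt j.isLt]
  obtain ⟨C, hC, huC, hvC⟩ := hQ.exists_mem_of_isSaturated hnc
    (Fin.lt_def.2 (by simp [u, v]; omega))
    (isSaturated_Ioc_of_minimal_period hπ hnc hT (Nat.find_spec hex)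
      (fun s => Nat.find_min hex) hu.1 hu.2 hv.1 hv.2)
  exact ⟨C.image red, mem_image_of_mem _ hC, hu.2 ▸ mem_image_of_mem _ huC,
    hv.2 ▸ mem_image_of_mem _ hvC⟩

theorem isSaturated_redPart_Ioc {π Q : Finset (Finset (Fin ((k + 1) * n)))}
    (hπ : IsPartition π) (hQ : IsPartition Q) (hnc : IsNonCrossing (unionPart π Q))
    (hRπ : IsPartition (redPart π)) (hRQ : IsPartition (redPart Q))
    {C : Finset (Fin ((k + 1) * n))} (hC : C ∈ Q) {u v : Fin ((k + 1) * n)} (hu : u ∈ C)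
    (hv : v ∈ C) : IsSaturated (redPart π) (Set.Ioc (red u) (red v)) := by
  rcases lt_or_ge (red u) (red v) with h | h
  · rcases lt_trichotomy u v with huv | rfl | hvu
    · rw [← cycIoc_of_lt h]
      exact isSaturated_redPart_cycIoc hπ hQ hnc hRπ hRQ hC hu hv huv h.ne
    · exact absurd h (lt_irrefl _)
    · have hsat := isSaturated_redPart_cycIoc hπ hQ hnc hRπ hRQ hC hv hu hvu h.ne'
      rw [← compl_cycIoc h.ne, cycIoc_of_lt h] at hsat
      simpa using hsat.compl
  · simp [IsSaturated, Set.Ioc_eq_empty_of_le h]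

end Reduction

/-- **Statement 10.** For every `π ∈ NC^{(k)}(n)`, the Kreweras complement of the
reduction equals the reduction of the Kreweras complement:
`Kr(Red(π)) = Red(Kr(π))` as partitions of `[n̄]` (identified with partitions of `[n]`). -/
theorem stmt10 (k n : ℕ) (hn : 1 ≤ n)
    (π : Finset (Finset (Fin ((k + 1) * n)))) (hπ : π ∈ NCk k n) :
    kr (redPart π) = redPart (kr π) := by
  obtain ⟨hπp, hπnc, hRπp, hRπnc, hRKp, hRKnc⟩ := hπ
  have hKr : IsKr π (kr π) := isKr_kr <| by
    by_contra hnone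
    rw [kr, dif_neg hnone] at hRKp
    obtain ⟨B, hB, -⟩ := hRKp.exists_mem ⟨0, hn⟩
    simp [redPart] at hB
  refine kr_eq_of_isKr ⟨hRKp, isNonCrossing_unionPart hRπnc hRKnc ?_, fun q hq hqnc => ?_⟩
  · intro C hC a ha b hb
    obtain ⟨C₀, hC₀, rfl⟩ := Finset.mem_image.1 hC
    obtain ⟨u, hu, rfl⟩ := Finset.mem_image.1 ha
    obtain ⟨v, hv, rfl⟩ := Finset.mem_image.1 hb
    exact isSaturated_redPart_Ioc hπp hKr.1 hKr.2.1 hRπp hRKp hC₀ hu hv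
  · refine refines_of_forall_lt hq.1 hRKp fun i j hij ⟨D, hD, hi, hj⟩ => ?_
    exact exists_mem_redPart_of_isSaturated hπp hπnc hKr hij
      (isSaturated_Ioc_of_isNonCrossing_unionPart hqnc hD hi hj)
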